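/- (Crossless implies h-bound.) Let x, y ∈ B_A \ {0} with x ∼ y, and let λ ∈ Λ_x and ν ∈ Λ_y be crossless, i.e., the set Δ(λ,ν) = { (i,j) : 0 ≤ i ≤ deg x, 0 ≤ j ≤ deg y, x(λ,i) ∼ y(ν,j) } is totally ordered under the componentwise order on ℕ². Then δ(λ,ν) := #Δ(λ,ν) − 2 ≤ deg h(x,y) − 1, where h(x,y) is the componentwise minimum of x and y. -/

import Mathlib

open scoped Classical

def eVec (d α : ℕ) (i : Fin d) : Fin d → ℕ := fun j => if j = i then α else 0

def genSet (d α c : ℕ) (a : Fin c → Fin d → ℕ) : Set (Fin d → ℕ) :=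
  Set.range (eVec d α) ∪ Set.range a

def Bmon (d α c : ℕ) (a : Fin c → Fin d → ℕ) : AddSubmonoid (Fin d → ℕ) :=
  AddSubmonoid.closure (genSet d α c a)

def Amon (d α : ℕ) : AddSubmonoid (Fin d → ℕ) :=
  AddSubmonoid.closure (Set.range (eVec d α))

def BAset (d α c : ℕ) (a : Fin c → Fin d → ℕ) : Set (Fin d → ℕ) :=
  {x | x ∈ Bmon d α c a ∧ ∀ y ∈ Amon d α, y ≠ 0 → ∀ z ∈ Bmon d α c a, z + y ≠ x}

def equivA (α : ℕ) {d : ℕ} (x y : Fin d → ℕ) : Prop :=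
  ∀ i, (α : ℤ) ∣ (x i : ℤ) - (y i : ℤ)

def degv (α : ℕ) {d : ℕ} (x : Fin d → ℕ) : ℕ := (∑ i, x i) / α

def pval {d : ℕ} (x : Fin d → ℕ) (L : List (Fin d → ℕ)) (i : ℕ) : Fin d → ℕ :=
  x - (L.take i).sum

def starSeq (d α c : ℕ) (a : Fin c → Fin d → ℕ) (x : Fin d → ℕ)
    (L : List (Fin d → ℕ)) : Prop :=
  (∀ b ∈ L, b ∈ genSet d α c a) ∧
  ∀ i ≤ L.length, ∃ y ∈ Bmon d α c a, y + (L.take i).sum = x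

def Lam (d α c : ℕ) (a : Fin c → Fin d → ℕ) (x : Fin d → ℕ) :
    Set (List (Fin d → ℕ)) :=
  {L | starSeq d α c a x L ∧ L.length = degv α x}

noncomputable def DeltaF (α : ℕ) {d : ℕ} (x y : Fin d → ℕ)
    (L M : List (Fin d → ℕ)) : Finset (ℕ × ℕ) :=
  (Finset.range (L.length + 1) ×ˢ Finset.range (M.length + 1)).filter
    (fun p => equivA α (pval x L p.1) (pval y M p.2))

def hmin {d : ℕ} (x y : Fin d → ℕ) : Fin d → ℕ := fun i => min (x i) (y i)

def crossless (α : ℕ) {d : ℕ} (x y : Fin d → ℕ) (L M : List (Fin d → ℕ)) : Prop :=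
  ∀ p ∈ DeltaF α x y L M, ∀ q ∈ DeltaF α x y L M, p ≤ q ∨ q ≤ p

def isCross (α : ℕ) {d : ℕ} (x y : Fin d → ℕ) (L M : List (Fin d → ℕ))
    (i j l k : ℕ) : Prop :=
  i < j ∧ j ≤ L.length ∧ l < k ∧ k ≤ M.length ∧
  equivA α (pval x L i) (pval y M k) ∧ equivA α (pval x L j) (pval y M l)

noncomputable def deltaMin (d α c : ℕ) (a : Fin c → Fin d → ℕ)
    (x y : Fin d → ℕ) : ℕ :=
  sInf {n | ∃ L ∈ Lam d α c a x, ∃ M ∈ Lam d α c a y,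
    n + 2 = (DeltaF α x y L M).card}

def eqvSetoid (α : ℕ) {d : ℕ} (S : Set (Fin d → ℕ)) : Setoid S where
  r x y := equivA α x.1 y.1
  iseqv := by
    refine ⟨fun x i => ?_, fun {x y} h i => ?_, fun {x y z} h1 h2 i => ?_⟩
    · simp
    · exact dvd_sub_comm.mp (h i)
    · have := dvd_add (h1 i) (h2 i)
      simpa [sub_add_sub_cancel] using this

noncomputable def numClasses (d α c : ℕ) (a : Fin c → Fin d → ℕ) : ℕ :=
  Nat.card (Quotient (eqvSetoid α (BAset d α c a)))

section H
variable {d α c : ℕ} {a : Fin c → Fin d → ℕ}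

lemma sum_gen (ha : ∀ i, ∑ j, a i j = α) {b : Fin d → ℕ} (hb : b ∈ genSet d α c a) :
    ∑ j, b j = α := by
  rcases hb with ⟨i, rfl⟩ | ⟨i, rfl⟩
  · simp [eVec]
  · exact ha i

lemma list_sum_coords (ha : ∀ i, ∑ j, a i j = α) :
    ∀ L : List (Fin d → ℕ), (∀ b ∈ L, b ∈ genSet d α c a) →
      ∑ j, L.sum j = L.length * α := by
  intro L
  induction L with
  | nil => simp
  | cons b L ih =>
    intro h
    have hb := sum_gen ha (h b (by simp))
    have hL := ih (fun v hv => h v (by simp [hv]))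
    simp only [List.sum_cons, List.length_cons, Pi.add_apply, Finset.sum_add_distrib, hb, hL]
    ring

lemma list_sum_mem_B {L : List (Fin d → ℕ)} (h : ∀ b ∈ L, b ∈ genSet d α c a) :
    L.sum ∈ Bmon d α c a :=
  AddSubmonoid.list_sum_mem _ (fun b hb => AddSubmonoid.subset_closure (h b hb))

lemma B_sum_dvd (ha : ∀ i, ∑ j, a i j = α) {v : Fin d → ℕ} (hv : v ∈ Bmon d α c a) :
    α ∣ ∑ j, v j := by
  induction hv using AddSubmonoid.closure_induction with
  | mem b hb => exact (sum_gen ha hb) ▸ dvd_refl α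
  | zero => simp
  | add u v _ _ hu hv =>
      have : ∑ j, (u + v) j = (∑ j, u j) + ∑ j, v j := by
        simp [Finset.sum_add_distrib]
      exact this ▸ dvd_add hu hv

lemma mem_Amon_of_dvd (hα : 0 < α) {v : Fin d → ℕ} (h : ∀ j, α ∣ v j) : v ∈ Amon d α := by
  have hv : v = ∑ i : Fin d, (v i / α) • eVec d α i := by
    funext j
    rw [Finset.sum_apply]
    have : ∀ i : Fin d, ((v i / α) • eVec d α i) j = if j = i then (v j / α) * α else 0 := by
      intro i
      simp only [Pi.smul_apply, eVec, smul_eq_mul, mul_ite, mul_zero]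
      by_cases hij : j = i <;> simp [hij]
    rw [Finset.sum_congr rfl (fun i _ => this i), Finset.sum_ite_eq Finset.univ j]
    simp [Nat.div_mul_cancel (h j)]
  rw [hv]
  exact AddSubmonoid.sum_mem _ fun i _ =>
    AddSubmonoid.nsmul_mem (Amon d α) (AddSubmonoid.subset_closure (Set.mem_range_self i)) _
end H

section H2
variable {d α c : ℕ} {a : Fin c → Fin d → ℕ}

lemma pval_spec {x : Fin d → ℕ} {L : List (Fin d → ℕ)}
    (hstar : ∀ i ≤ L.length, ∃ z ∈ Bmon d α c a, z + (L.take i).sum = x)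
    {i : ℕ} (hi : i ≤ L.length) :
    pval x L i ∈ Bmon d α c a ∧ pval x L i + (L.take i).sum = x := by
  obtain ⟨z, hz, hzx⟩ := hstar i hi
  have he : pval x L i = z := by
    funext j
    have := congrFun hzx j
    simp only [Pi.add_apply] at this
    simp only [pval, Pi.sub_apply]
    omega
  rw [he]; exact ⟨hz, hzx⟩

lemma pval_zero (x : Fin d → ℕ) (L : List (Fin d → ℕ)) : pval x L 0 = x := by
  funext j; simp [pval]

lemma take_sum_coords (ha : ∀ i, ∑ j, a i j = α) {L : List (Fin d → ℕ)}
    (h : ∀ b ∈ L, b ∈ genSet d α c a) {i : ℕ} (hi : i ≤ L.length) :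
    ∑ j, (L.take i).sum j = i * α := by
  have := list_sum_coords ha (L.take i) (fun b hb => h b ((List.take_sublist i L).subset hb))
  rwa [List.length_take, Nat.min_eq_left hi] at this

lemma min_sum_dvd (ha : ∀ i, ∑ j, a i j = α) {x y : Fin d → ℕ}
    (hx : x ∈ Bmon d α c a) (hxy : equivA α x y) :
    α ∣ ∑ j, min (x j) (y j) := by
  have h1 : α ∣ ∑ j, x j := B_sum_dvd ha hx
  have h2 : (α : ℤ) ∣ ∑ j, ((x j : ℤ) - (min (x j) (y j) : ℤ)) := by
    refine Finset.dvd_sum fun j _ => ?_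
    rcases le_total (x j) (y j) with h | h
    · rw [min_eq_left (by exact_mod_cast h : (x j : ℤ) ≤ (y j : ℤ))]; simp
    · rw [min_eq_right (by exact_mod_cast h : (y j : ℤ) ≤ (x j : ℤ))]; exact hxy j
  have h3 : (α : ℤ) ∣ (∑ j, (min (x j) (y j) : ℤ)) := by
    have hx' : (α : ℤ) ∣ ∑ j, (x j : ℤ) := by
      have := Int.natCast_dvd_natCast.mpr h1
      simpa using this
    have : (∑ j, (min (x j) (y j) : ℤ)) =
        (∑ j, (x j : ℤ)) - ∑ j, ((x j : ℤ) - (min (x j) (y j) : ℤ)) := by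
      rw [Finset.sum_sub_distrib]; ring
    rw [this]
    exact dvd_sub hx' h2
  have : ((∑ j, min (x j) (y j) : ℕ) : ℤ) = ∑ j, (min (x j) (y j) : ℤ) := by push_cast; rfl
  exact Int.natCast_dvd_natCast.mp (this ▸ h3)
end H2

section H3
variable {d α c : ℕ} {a : Fin c → Fin d → ℕ}

lemma hmin_pos (hα : 0 < α) (ha : ∀ i, ∑ j, a i j = α) {x y : Fin d → ℕ}
    (hx : x ∈ BAset d α c a) (hx0 : x ≠ 0) (hxy : equivA α x y) :
    α ≤ ∑ j, min (x j) (y j) := by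
  have hdvd := min_sum_dvd ha hx.1 hxy
  refine Nat.le_of_dvd (Nat.pos_of_ne_zero ?_) hdvd
  intro h0
  have hz : ∀ j, min (x j) (y j) = 0 := by
    intro j
    exact Finset.sum_eq_zero_iff.mp h0 j (Finset.mem_univ j)
  have hxA : x ∈ Amon d α := by
    refine mem_Amon_of_dvd hα fun j => ?_
    rcases le_total (x j) (y j) with h | h
    · have : x j = 0 := by have := hz j; rw [min_eq_left h] at this; exact this
      simp [this]
    · have hy0 : y j = 0 := by have := hz j; rw [min_eq_right h] at this; exact this
      have := hxy j
      rw [hy0] at this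
      simpa using Int.natCast_dvd_natCast.mp (by simpa using this)
  exact hx.2 x hxA hx0 0 (AddSubmonoid.zero_mem _) (by simp)

lemma mem_DeltaF_iff {x y : Fin d → ℕ} {L M : List (Fin d → ℕ)} (i j : ℕ) :
    (i, j) ∈ DeltaF α x y L M ↔
      i ≤ L.length ∧ j ≤ M.length ∧ equivA α (pval x L i) (pval y M j) := by
  simp [DeltaF, Finset.mem_filter, Finset.mem_product, Nat.lt_succ_iff, and_assoc]
end H3

lemma main_lemma (d α c : ℕ) (hα : 0 < α) (a : Fin c → Fin d → ℕ)
    (ha : ∀ i, ∑ j, a i j = α) :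
    ∀ N : ℕ, ∀ x y : Fin d → ℕ, x ∈ BAset d α c a → x ≠ 0 → y ∈ BAset d α c a → y ≠ 0 →
      equivA α x y → ∀ L ∈ Lam d α c a x, ∀ M ∈ Lam d α c a y,
      crossless α x y L M → (DeltaF α x y L M).card = N →
      N * α ≤ (∑ j, min (x j) (y j)) + α := by
  intro N
  induction N using Nat.strong_induction_on with
  | _ N IH =>
  intro x y hx hx0 hy hy0 hxy L hL M hM hcl hcard
  by_cases hN1 : N ≤ 1
  · calc N * α ≤ 1 * α := mul_le_mul_left hN1 α
      _ = α := one_mul α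
      _ ≤ _ := Nat.le_add_left α _
  push_neg at hN1
  obtain ⟨⟨hLgen, hLstar⟩, hLlen⟩ := hL
  obtain ⟨⟨hMgen, hMstar⟩, hMlen⟩ := hM
  have hxdvd : α ∣ ∑ j, x j := B_sum_dvd ha hx.1
  have hydvd : α ∣ ∑ j, y j := B_sum_dvd ha hy.1
  have hsumx : ∑ j, x j = L.length * α := by
    rw [hLlen]; unfold degv; rw [Nat.div_mul_cancel hxdvd]
  have hsumy : ∑ j, y j = M.length * α := by
    rw [hMlen]; unfold degv; rw [Nat.div_mul_cancel hydvd]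
  set Δ := DeltaF α x y L M with hΔ
  have h00 : ((0,0) : ℕ × ℕ) ∈ Δ := by
    rw [hΔ, mem_DeltaF_iff]
    exact ⟨Nat.zero_le _, Nat.zero_le _, by rw [pval_zero, pval_zero]; exact hxy⟩
  have hne' : (Δ.erase (0,0)).Nonempty := by
    rw [← Finset.card_pos, Finset.card_erase_of_mem h00, hcard]; omega
  obtain ⟨q1, hq1mem, hq1minimal⟩ := Finset.exists_minimal hne'
  have hq1Δ : q1 ∈ Δ := Finset.mem_of_mem_erase hq1mem
  have hq1ne : q1 ≠ (0,0) := Finset.ne_of_mem_erase hq1mem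
  have hq1le : ∀ p ∈ Δ.erase (0,0), q1 ≤ p := by
    intro p hp
    rcases hcl q1 hq1Δ p (Finset.mem_of_mem_erase hp) with h | h
    · exact h
    · rcases eq_or_lt_of_le h with h' | h'
      · exact le_of_eq h'.symm
      · exact absurd (hq1minimal hp h'.le) (not_le_of_gt h')
  obtain ⟨i1, j1⟩ := q1
  rw [hΔ, mem_DeltaF_iff] at hq1Δ
  obtain ⟨hi1, hj1, hq1e⟩ := hq1Δ
  set s := (L.take i1).sum with hs
  set t := (M.take j1).sum with ht
  set x' := pval x L i1 with hx'def
  set y' := pval y M j1 with hy'def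
  obtain ⟨hx'B, hx's⟩ := pval_spec (a := a) hLstar hi1
  obtain ⟨hy'B, hy't⟩ := pval_spec (a := a) hMstar hj1
  rw [← hx'def] at hx'B hx's
  rw [← hs] at hx's
  rw [← hy'def] at hy'B hy't
  rw [← ht] at hy't
  have hsB : s ∈ Bmon d α c a :=
    list_sum_mem_B (fun b hb => hLgen b ((List.take_sublist i1 L).subset hb))
  have htB : t ∈ Bmon d α c a :=
    list_sum_mem_B (fun b hb => hMgen b ((List.take_sublist j1 M).subset hb))
  have hssum : ∑ j, s j = i1 * α := take_sum_coords ha hLgen hi1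
  have htsum : ∑ j, t j = j1 * α := take_sum_coords ha hMgen hj1
  have hsumx' : (∑ j, x' j) + i1 * α = L.length * α := by
    have h1 : ∑ j, (x' + s) j = ∑ j, x j := by rw [hx's]
    simp only [Pi.add_apply, Finset.sum_add_distrib] at h1
    rw [hssum, hsumx] at h1
    exact h1
  have hsumy' : (∑ j, y' j) + j1 * α = M.length * α := by
    have h1 : ∑ j, (y' + t) j = ∑ j, y j := by rw [hy't]
    simp only [Pi.add_apply, Finset.sum_add_distrib] at h1
    rw [htsum, hsumy] at h1
    exact h1
  by_cases hx'0 : x' = 0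
  · have hy'dvd : ∀ j, α ∣ y' j := by
      intro j
      have h1 := hq1e j
      rw [hx'0] at h1
      simp only [Pi.zero_apply, Nat.cast_zero, zero_sub, dvd_neg] at h1
      exact_mod_cast h1
    by_cases hy'0 : y' = 0
    · have hx'sum0 : ∑ j, x' j = 0 := by rw [hx'0]; simp
      have hy'sum0 : ∑ j, y' j = 0 := by rw [hy'0]; simp
      have hi1n : i1 = L.length := by
        rw [hx'sum0, zero_add] at hsumx'
        exact Nat.eq_of_mul_eq_mul_right hα hsumx'
      have hj1m : j1 = M.length := by
        rw [hy'sum0, zero_add] at hsumy'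
        exact Nat.eq_of_mul_eq_mul_right hα hsumy'
      have hsub : Δ ⊆ {(0,0), (i1,j1)} := by
        intro p hp
        by_cases hp0 : p = (0,0)
        · simp [hp0]
        · have hle := hq1le p (Finset.mem_erase.mpr ⟨hp0, hp⟩)
          obtain ⟨p1, p2⟩ := p
          rw [hΔ, mem_DeltaF_iff] at hp
          rw [Prod.mk_le_mk] at hle
          have hp1 : p1 = i1 := by omega
          have hp2 : p2 = j1 := by omega
          simp [hp1, hp2]
      have hN2 : N ≤ 2 := by
        rw [← hcard]
        calc Δ.card ≤ ({(0,0),(i1,j1)} : Finset (ℕ×ℕ)).card := Finset.card_le_card hsub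
          _ ≤ 2 := by
            apply le_trans (Finset.card_insert_le _ _)
            simp
      have hαmin := hmin_pos hα ha hx hx0 hxy
      calc N * α ≤ 2 * α := mul_le_mul_left hN2 α
        _ = α + α := by ring
        _ ≤ _ := by omega
    · exfalso
      exact hy.2 y' (mem_Amon_of_dvd hα hy'dvd) hy'0 t htB (by rw [add_comm]; exact hy't)
  by_cases hy'0 : y' = 0
  · exfalso
    have hx'dvd : ∀ j, α ∣ x' j := by
      intro j
      have h1 := hq1e j
      rw [hy'0] at h1
      simp only [Pi.zero_apply, Nat.cast_zero, sub_zero] at h1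
      exact_mod_cast h1
    exact hx.2 x' (mem_Amon_of_dvd hα hx'dvd) hx'0 s hsB (by rw [add_comm]; exact hx's)
  -- main recursion
  set L' := L.drop i1 with hL'def
  set M' := M.drop j1 with hM'def
  have hL'len : L'.length = L.length - i1 := List.length_drop (i := i1) (l := L)
  have hM'len : M'.length = M.length - j1 := List.length_drop (i := j1) (l := M)
  have hL'gen : ∀ b ∈ L', b ∈ genSet d α c a :=
    fun b hb => hLgen b ((List.drop_sublist i1 L).subset hb)
  have hM'gen : ∀ b ∈ M', b ∈ genSet d α c a :=
    fun b hb => hMgen b ((List.drop_sublist j1 M).subset hb)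
  have hstarL' : ∀ i ≤ L'.length, ∃ z ∈ Bmon d α c a, z + (L'.take i).sum = x' := by
    intro i hi
    obtain ⟨z, hz, hzx⟩ := hLstar (i1 + i) (by rw [hL'len] at hi; omega)
    refine ⟨z, hz, ?_⟩
    have hta : L.take (i1 + i) = L.take i1 ++ L'.take i := by
      rw [hL'def, List.take_add]
    rw [hta, List.sum_append] at hzx
    have h2 : z + (L'.take i).sum + s = x' + s := by
      rw [hx's]
      calc z + (L'.take i).sum + s = z + (s + (L'.take i).sum) := by abel
        _ = x := hzx
    exact add_right_cancel h2
  have hstarM' : ∀ i ≤ M'.length, ∃ z ∈ Bmon d α c a, z + (M'.take i).sum = y' := by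
    intro i hi
    obtain ⟨z, hz, hzy⟩ := hMstar (j1 + i) (by rw [hM'len] at hi; omega)
    refine ⟨z, hz, ?_⟩
    have hta : M.take (j1 + i) = M.take j1 ++ M'.take i := by
      rw [hM'def, List.take_add]
    rw [hta, List.sum_append] at hzy
    have h2 : z + (M'.take i).sum + t = y' + t := by
      rw [hy't]
      calc z + (M'.take i).sum + t = z + (t + (M'.take i).sum) := by abel
        _ = y := hzy
    exact add_right_cancel h2
  have hpvL : ∀ i ≤ L'.length, pval x' L' i = pval x L (i1 + i) := by
    intro i hi
    obtain ⟨_, h1⟩ := pval_spec (a := a) hstarL' hi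
    obtain ⟨_, h2⟩ := pval_spec (a := a) hLstar (i := i1 + i) (by rw [hL'len] at hi; omega)
    have hta : L.take (i1 + i) = L.take i1 ++ L'.take i := by
      rw [hL'def, List.take_add]
    rw [hta, List.sum_append] at h2
    have h3 : pval x L (i1 + i) + (L'.take i).sum + s = pval x' L' i + (L'.take i).sum + s := by
      rw [h1, hx's]
      calc pval x L (i1+i) + (L'.take i).sum + s
          = pval x L (i1+i) + (s + (L'.take i).sum) := by abel
        _ = x := h2
    exact (add_right_cancel (add_right_cancel h3)).symm
  have hpvM : ∀ i ≤ M'.length, pval y' M' i = pval y M (j1 + i) := by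
    intro i hi
    obtain ⟨_, h1⟩ := pval_spec (a := a) hstarM' hi
    obtain ⟨_, h2⟩ := pval_spec (a := a) hMstar (i := j1 + i) (by rw [hM'len] at hi; omega)
    have hta : M.take (j1 + i) = M.take j1 ++ M'.take i := by
      rw [hM'def, List.take_add]
    rw [hta, List.sum_append] at h2
    have h3 : pval y M (j1 + i) + (M'.take i).sum + t = pval y' M' i + (M'.take i).sum + t := by
      rw [h1, hy't]
      calc pval y M (j1+i) + (M'.take i).sum + t
          = pval y M (j1+i) + (t + (M'.take i).sum) := by abel
        _ = y := h2
    exact (add_right_cancel (add_right_cancel h3)).symm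
  have hsumx'' : ∑ j, x' j = (L.length - i1) * α := by
    rw [Nat.sub_mul]
    exact (Nat.sub_eq_of_eq_add hsumx'.symm).symm
  have hsumy'' : ∑ j, y' j = (M.length - j1) * α := by
    rw [Nat.sub_mul]
    exact (Nat.sub_eq_of_eq_add hsumy'.symm).symm
  have hdegx' : degv α x' = L.length - i1 := by
    unfold degv; rw [hsumx'', Nat.mul_div_cancel _ hα]
  have hdegy' : degv α y' = M.length - j1 := by
    unfold degv; rw [hsumy'', Nat.mul_div_cancel _ hα]
  have hx'BA : x' ∈ BAset d α c a := by
    refine ⟨hx'B, fun u hu hu0 z hz => ?_⟩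
    intro hzu
    exact hx.2 u hu hu0 (z + s) (AddSubmonoid.add_mem _ hz hsB)
      (by rw [add_right_comm, hzu]; exact hx's)
  have hy'BA : y' ∈ BAset d α c a := by
    refine ⟨hy'B, fun u hu hu0 z hz => ?_⟩
    intro hzu
    exact hy.2 u hu hu0 (z + t) (AddSubmonoid.add_mem _ hz htB)
      (by rw [add_right_comm, hzu]; exact hy't)
  have himage : DeltaF α x' y' L' M' = (Δ.erase (0,0)).image (fun p => (p.1 - i1, p.2 - j1)) := by
    ext ⟨i, j⟩
    simp only [Finset.mem_image, Finset.mem_erase]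
    constructor
    · intro hij
      rw [mem_DeltaF_iff] at hij
      obtain ⟨hi, hj, he⟩ := hij
      refine ⟨(i1 + i, j1 + j), ⟨?_, ?_⟩, ?_⟩
      · intro hcon
        rw [Prod.mk.injEq] at hcon
        exact hq1ne (by rw [Prod.mk.injEq]; omega)
      · rw [hΔ, mem_DeltaF_iff]
        refine ⟨by rw [hL'len] at hi; omega, by rw [hM'len] at hj; omega, ?_⟩
        rw [← hpvL i hi, ← hpvM j hj]
        exact he
      · simp only [Prod.mk.injEq]
        omega
    · rintro ⟨⟨p1, p2⟩, ⟨hpne, hpΔ⟩, hfp⟩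
      simp only [Prod.mk.injEq] at hfp
      obtain ⟨rfl, rfl⟩ := hfp
      have hle := hq1le (p1,p2) (Finset.mem_erase.mpr ⟨hpne, hpΔ⟩)
      rw [Prod.mk_le_mk] at hle
      rw [hΔ, mem_DeltaF_iff] at hpΔ
      obtain ⟨h1, h2, he⟩ := hpΔ
      have hi : p1 - i1 ≤ L'.length := by rw [hL'len]; omega
      have hj : p2 - j1 ≤ M'.length := by rw [hM'len]; omega
      rw [mem_DeltaF_iff]
      refine ⟨hi, hj, ?_⟩
      rw [hpvL _ hi, hpvM _ hj]
      have e1 : i1 + (p1 - i1) = p1 := by omega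
      have e2 : j1 + (p2 - j1) = p2 := by omega
      rw [e1, e2]; exact he
  have hinj : Set.InjOn (fun p : ℕ × ℕ => (p.1 - i1, p.2 - j1)) (Δ.erase (0,0)) := by
    intro p hp q hq hfpq
    have hp' := hq1le p hp
    have hq' := hq1le q hq
    obtain ⟨p1, p2⟩ := p
    obtain ⟨r1, r2⟩ := q
    rw [Prod.mk_le_mk] at hp' hq'
    simp only [Prod.mk.injEq] at hfpq ⊢
    omega
  have hcard' : (DeltaF α x' y' L' M').card = N - 1 := by
    rw [himage, Finset.card_image_of_injOn hinj, Finset.card_erase_of_mem h00, hcard]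
  have hcl' : crossless α x' y' L' M' := by
    intro p hp q hq
    rw [himage] at hp hq
    simp only [Finset.mem_image] at hp hq
    obtain ⟨P, hP, rfl⟩ := hp
    obtain ⟨Q, hQ, rfl⟩ := hq
    have h1 := hq1le P hP
    have h2 := hq1le Q hQ
    obtain ⟨P1, P2⟩ := P
    obtain ⟨Q1, Q2⟩ := Q
    rw [Prod.mk_le_mk] at h1 h2
    rcases hcl (P1, P2) (Finset.mem_of_mem_erase hP) (Q1, Q2) (Finset.mem_of_mem_erase hQ)
      with h | h
    · left
      rw [Prod.mk_le_mk] at h ⊢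
      omega
    · right
      rw [Prod.mk_le_mk] at h ⊢
      omega
  have hL'mem : L' ∈ Lam d α c a x' := ⟨⟨hL'gen, hstarL'⟩, by rw [hL'len, hdegx']⟩
  have hM'mem : M' ∈ Lam d α c a y' := ⟨⟨hM'gen, hstarM'⟩, by rw [hM'len, hdegy']⟩
  have hIH := IH (N-1) (by omega) x' y' hx'BA hx'0 hy'BA hy'0 hq1e L' hL'mem M' hM'mem hcl' hcard'
  have hx'le : ∀ j, x' j ≤ x j := by
    intro j
    have h1 := congrFun hx's j
    simp only [Pi.add_apply] at h1
    omega
  have hy'le : ∀ j, y' j ≤ y j := by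
    intro j
    have h1 := congrFun hy't j
    simp only [Pi.add_apply] at h1
    omega
  have hmono : ∀ j, min (x' j) (y' j) ≤ min (x j) (y j) :=
    fun j => min_le_min (hx'le j) (hy'le j)
  have hdvd1 : α ∣ ∑ j, min (x j) (y j) := min_sum_dvd ha hx.1 hxy
  have hdvd2 : α ∣ ∑ j, min (x' j) (y' j) := min_sum_dvd ha hx'B hq1e
  have hlt : ∑ j, min (x' j) (y' j) < ∑ j, min (x j) (y j) := by
    rcases lt_or_eq_of_le (Finset.sum_le_sum (fun j _ => hmono j)) with h | h
    · exact h
    exfalso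
    have heq : ∀ j, min (x' j) (y' j) = min (x j) (y j) := by
      by_contra hcon
      push_neg at hcon
      obtain ⟨j0, hj0⟩ := hcon
      have hlt' : ∑ j, min (x' j) (y' j) < ∑ j, min (x j) (y j) :=
        Finset.sum_lt_sum (fun j _ => hmono j)
          ⟨j0, Finset.mem_univ j0, lt_of_le_of_ne (hmono j0) hj0⟩
      omega
    have hsdvd : ∀ j, α ∣ s j := by
      intro j
      have e1 : (α:ℤ) ∣ (x j : ℤ) - ((min (x j) (y j) : ℕ) : ℤ) := by
        rcases le_total (x j) (y j) with h' | h'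
        · rw [min_eq_left h']; simp
        · rw [min_eq_right h']; exact hxy j
      have e2 : (α:ℤ) ∣ (x' j : ℤ) - ((min (x j) (y j) : ℕ) : ℤ) := by
        rw [← heq j]
        rcases le_total (x' j) (y' j) with h' | h'
        · rw [min_eq_left h']; simp
        · rw [min_eq_right h']; exact hq1e j
      have e3 := dvd_sub e1 e2
      rw [sub_sub_sub_cancel_right] at e3
      have e4 : (x j : ℤ) - (x' j : ℤ) = (s j : ℤ) := by
        have h1 := congrFun hx's j
        simp only [Pi.add_apply] at h1
        push_cast
        omega
      rw [e4] at e3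
      exact_mod_cast e3
    have htdvd : ∀ j, α ∣ t j := by
      intro j
      have e1 : (α:ℤ) ∣ (y j : ℤ) - ((min (x j) (y j) : ℕ) : ℤ) := by
        rcases le_total (x j) (y j) with h' | h'
        · rw [min_eq_left h']; exact dvd_sub_comm.mp (hxy j)
        · rw [min_eq_right h']; simp
      have e2 : (α:ℤ) ∣ (y' j : ℤ) - ((min (x j) (y j) : ℕ) : ℤ) := by
        rw [← heq j]
        rcases le_total (x' j) (y' j) with h' | h'
        · rw [min_eq_left h']; exact dvd_sub_comm.mp (hq1e j)
        · rw [min_eq_right h']; simp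
      have e3 := dvd_sub e1 e2
      rw [sub_sub_sub_cancel_right] at e3
      have e4 : (y j : ℤ) - (y' j : ℤ) = (t j : ℤ) := by
        have h1 := congrFun hy't j
        simp only [Pi.add_apply] at h1
        push_cast
        omega
      rw [e4] at e3
      exact_mod_cast e3
    have hij : i1 ≠ 0 ∨ j1 ≠ 0 := by
      by_contra hcon
      push_neg at hcon
      exact hq1ne (by rw [Prod.mk.injEq]; exact ⟨hcon.1, hcon.2⟩)
    rcases hij with h1 | h1
    · have hs0 : s ≠ 0 := by
        intro h0
        rw [h0] at hssum
        simp only [Pi.zero_apply, Finset.sum_const_zero] at hssum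
        rcases Nat.mul_eq_zero.mp hssum.symm with h | h <;> omega
      exact hx.2 s (mem_Amon_of_dvd hα hsdvd) hs0 x' hx'B hx's
    · have ht0 : t ≠ 0 := by
        intro h0
        rw [h0] at htsum
        simp only [Pi.zero_apply, Finset.sum_const_zero] at htsum
        rcases Nat.mul_eq_zero.mp htsum.symm with h | h <;> omega
      exact hy.2 t (mem_Amon_of_dvd hα htdvd) ht0 y' hy'B hy't
  have hstep : (∑ j, min (x' j) (y' j)) + α ≤ ∑ j, min (x j) (y j) := by
    have hd : α ∣ (∑ j, min (x j) (y j)) - ∑ j, min (x' j) (y' j) := Nat.dvd_sub hdvd1 hdvd2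
    have hge : α ≤ (∑ j, min (x j) (y j)) - ∑ j, min (x' j) (y' j) :=
      Nat.le_of_dvd (by omega) hd
    omega
  calc N * α = (N - 1) * α + α := by
        have h : N - 1 + 1 = N := by omega
        calc N * α = ((N-1)+1) * α := by rw [h]
          _ = (N-1)*α + α := by ring
    _ ≤ ((∑ j, min (x' j) (y' j)) + α) + α := Nat.add_le_add_right hIH α
    _ ≤ (∑ j, min (x j) (y j)) + α := by omega


/-- if `x, y ∈ B_A \ {0}` with `x ∼ y` and `λ ∈ Λ_x`, `ν ∈ Λ_y` are
crossless, then `δ(λ,ν) = #Δ(λ,ν) − 2 ≤ deg h(x,y) − 1`. -/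
theorem crossless_delta_le (d α c : ℕ) (hd : 0 < d) (hα : 0 < α) (hc : 0 < c)
    (a : Fin c → Fin d → ℕ) (ha : ∀ i, ∑ j, a i j = α)
    (x y : Fin d → ℕ) (hx : x ∈ BAset d α c a) (hx0 : x ≠ 0)
    (hy : y ∈ BAset d α c a) (hy0 : y ≠ 0) (hxy : equivA α x y)
    (L : List (Fin d → ℕ)) (hL : L ∈ Lam d α c a x)
    (M : List (Fin d → ℕ)) (hM : M ∈ Lam d α c a y)
    (hcl : crossless α x y L M) :
    ((DeltaF α x y L M).card : ℤ) - 2 ≤ (degv α (hmin x y) : ℤ) - 1 := by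
  have hmain := main_lemma d α c hα a ha ((DeltaF α x y L M).card) x y hx hx0 hy hy0 hxy
    L hL M hM hcl rfl
  have hdvd : α ∣ ∑ j, min (x j) (y j) := min_sum_dvd ha hx.1 hxy
  obtain ⟨k, hk⟩ := hdvd
  have hk' : (∑ i, hmin x y i) = α * k := by simpa [hmin] using hk
  have hdeg : degv α (hmin x y) = k := by
    unfold degv
    rw [hk']
    exact Nat.mul_div_cancel_left _ hα
  rw [hk] at hmain
  have hN : (DeltaF α x y L M).card ≤ k + 1 := by
    by_contra hcon
    push_neg at hcon
    have h2 : (k + 2) * α ≤ (DeltaF α x y L M).card * α :=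
      mul_le_mul_left (by omega) α
    have h3 : (k + 2) * α = α * k + α + α := by ring
    rw [h3] at h2
    have h4 := le_trans h2 hmain
    omega
  rw [hdeg]
  push_cast
  omega
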